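/- arXiv:1803.02842 — 4 statements merged into one kernel-verified Lean document; each statement's English description precedes it below -/
import Mathlib

section
/- For every positive integer k, the set of ordered k-tuples (ν_1, …, ν_k) of oddly supported measures on ℝ^n, all with the same odd number N of support points and such that the combined collection of all Nk support points of ν_1, …, ν_k is in general position, is dense in the k-fold product of the space of Borel probability measures on ℝ^n. -/
/-!
Weak convergence is tested against bounded continuous functions. On a separable space a
probability measure is the weak limit of its images under simple-function approximations of the
identity, and a measure with finitely many atoms is the weak limit of uniform measures on `2m + 1`
points, obtained by rounding its weights down and giving the lost mass to one atom. So tuples of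
uniform measures with a common odd number of atoms are dense. The uniform measure depends
continuously on its atoms, and configurations in general position are dense (a new point can avoid
the finitely many proper affine spans of fewer than `n + 1` earlier points, none of which has
interior), so the atoms may moreover be put in general position.
-/

open MeasureTheory

noncomputable section

/-- A family of points of `ℝ^n` is in general position if no `n + 1` of them lie on a
common affine hyperplane (the zero set of an affine function with nonzero linear part). -/
def InGeneralPosition {n : ℕ} {ι : Type*} (p : ι → (Fin n → ℝ)) : Prop :=
  ∀ A : (Fin n → ℝ) →ᵃ[ℝ] ℝ, A.linear ≠ 0 → {k | A (p k) = 0}.encard ≤ n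

open Filter Topology ENNReal TopologicalSpace Module

lemma exists_fin_sum_comp_eq_sum_mul {ι : Type*} [Fintype ι] (c : ι → ℕ) {N : ℕ}
    (hc : ∑ j, c j = N) : ∃ a : Fin N → ι, ∀ g : ι → ℝ, ∑ l, g (a l) = ∑ j, c j * g j := by
  subst hc
  let e : (Σ j, Fin (c j)) ≃ Fin (∑ j, c j) := Fintype.equivFinOfCardEq (by simp)
  refine ⟨fun l => (e.symm l).1, fun g => ?_⟩
  rw [e.symm.sum_comp (fun σ => g σ.1), Fintype.sum_sigma]
  simp

lemma exists_nat_sum_eq_div_tendsto {ι : Type*} [Fintype ι] (w : ι → ℝ) (hw₀ : ∀ j, 0 ≤ w j)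
    (hw₁ : ∑ j, w j = 1) : ∃ c : ℕ → ι → ℕ, (∀ N, ∑ j, c N j = N) ∧
      ∀ j, Tendsto (fun N => (c N j : ℝ) / N) atTop (𝓝 (w j)) := by
  classical
  obtain ⟨j₀⟩ : Nonempty ι := by
    by_contra h
    simp [not_nonempty_iff.1 h] at hw₁
  -- every count is rounded down, and the atoms lost by rounding all go to `j₀`
  let r : ℕ → ℕ := fun N => N - ∑ j, ⌊w j * N⌋₊
  have hfloor : ∀ N : ℕ, ∑ j, ⌊w j * N⌋₊ ≤ N := fun N => by
    have : ∑ j, (⌊w j * N⌋₊ : ℝ) ≤ N := by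
      calc ∑ j, (⌊w j * N⌋₊ : ℝ) ≤ ∑ j, w j * N :=
            Finset.sum_le_sum fun j _ => Nat.floor_le (by have := hw₀ j; positivity)
        _ = N := by rw [← Finset.sum_mul, hw₁, one_mul]
    exact_mod_cast this
  have hfloor_lim : ∀ j, Tendsto (fun N : ℕ => (⌊w j * N⌋₊ : ℝ) / N) atTop (𝓝 (w j)) :=
    fun j => (tendsto_nat_floor_mul_div_atTop (hw₀ j)).comp tendsto_natCast_atTop_atTop
  have hr_lim : Tendsto (fun N : ℕ => (r N : ℝ) / N) atTop (𝓝 0) := by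
    have h : Tendsto (fun N : ℕ => 1 - ∑ j, (⌊w j * N⌋₊ : ℝ) / N) atTop (𝓝 (1 - ∑ j, w j)) :=
      tendsto_const_nhds.sub (tendsto_finsetSum _ fun j _ => hfloor_lim j)
    rw [hw₁, sub_self] at h
    refine h.congr' (eventually_ne_atTop 0 |>.mono fun N hN => ?_)
    simp only [r, Nat.cast_sub (hfloor N), Nat.cast_sum, sub_div, ← Finset.sum_div]
    rw [div_self (Nat.cast_ne_zero.2 hN)]
  refine ⟨fun N j => ⌊w j * N⌋₊ + if j = j₀ then r N else 0, fun N => ?_, fun j => ?_⟩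
  · simp [Finset.sum_add_distrib, r, Nat.add_sub_cancel' (hfloor N)]
  · by_cases hj : j = j₀
    · simpa [hj, add_div] using (hfloor_lim j₀).add hr_lim
    · simpa [hj] using hfloor_lim j

section EmpiricalMeasure

variable {Ω : Type*} [MeasurableSpace Ω]

lemma isProbabilityMeasure_inv_smul_sum_dirac {N : ℕ} [NeZero N] (p : Fin N → Ω) :
    IsProbabilityMeasure ((N : ℝ≥0∞)⁻¹ • ∑ l, Measure.dirac (p l)) := by
  constructor
  simp [ENNReal.inv_mul_cancel (NeZero.ne (N : ℝ≥0∞)) (natCast_ne_top N)]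

def empiricalMeasure {N : ℕ} [NeZero N] (p : Fin N → Ω) : ProbabilityMeasure Ω :=
  ⟨(N : ℝ≥0∞)⁻¹ • ∑ l, Measure.dirac (p l), isProbabilityMeasure_inv_smul_sum_dirac p⟩

lemma integral_empiricalMeasure [MeasurableSingletonClass Ω] {N : ℕ} [NeZero N]
    (p : Fin N → Ω) (g : Ω → ℝ) :
    ∫ ω, g ω ∂(empiricalMeasure p : Measure Ω) = (N : ℝ)⁻¹ * ∑ l, g (p l) := by
  rw [empiricalMeasure, ProbabilityMeasure.coe_mk, integral_smul_measure,
    integral_finsetSum_measure fun l _ => integrable_dirac enorm_lt_top]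
  simp [integral_dirac]

variable [TopologicalSpace Ω] [OpensMeasurableSpace Ω] [MeasurableSingletonClass Ω]

lemma continuous_empiricalMeasure {N : ℕ} [NeZero N] :
    Continuous (empiricalMeasure : (Fin N → Ω) → ProbabilityMeasure Ω) := by
  refine continuous_iff_continuousAt.2 fun p => ?_
  refine ProbabilityMeasure.tendsto_iff_forall_integral_tendsto.2 fun g => ?_
  simp only [integral_empiricalMeasure]
  exact (continuous_const.mul (continuous_finsetSum _ fun l _ =>
    g.continuous.comp (continuous_apply l))).tendsto p

lemma exists_tendsto_empiricalMeasure_map {ι : Type*} [Fintype ι] [MeasurableSpace ι]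
    [MeasurableSingletonClass ι] (π : ProbabilityMeasure ι) (x : ι → Ω) :
    ∃ p : ∀ m : ℕ, Fin (2 * m + 1) → Ω, Tendsto (fun m => empiricalMeasure (p m)) atTop
      (𝓝 (π.map (measurable_of_finite x).aemeasurable)) := by
  obtain ⟨c, hc_sum, hc_lim⟩ := exists_nat_sum_eq_div_tendsto (fun j => π.toMeasure.real {j})
    (fun j => measureReal_nonneg) (by rw [sum_measureReal_singleton, Finset.coe_univ, probReal_univ])
  choose a ha using fun N => exists_fin_sum_comp_eq_sum_mul (c N) (hc_sum N)
  refine ⟨fun m => x ∘ a (2 * m + 1), ProbabilityMeasure.tendsto_iff_forall_integral_tendsto.2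
    fun g => ?_⟩
  have hodd : Tendsto (fun m : ℕ => 2 * m + 1) atTop atTop :=
    tendsto_atTop_mono (fun m => show m ≤ 2 * m + 1 by omega) tendsto_id
  have hlim := tendsto_finsetSum Finset.univ fun j _ => ((hc_lim j).comp hodd).mul_const (g (x j))
  simp only [integral_empiricalMeasure, ProbabilityMeasure.toMeasure_map]
  rw [integral_map (measurable_of_finite x).aemeasurable g.continuous.aestronglyMeasurable,
    integral_fintype Integrable.of_finite]
  refine hlim.congr fun m => ?_
  rw [Function.comp_def, ha _ (fun j => g (x j)), Finset.mul_sum]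
  refine Finset.sum_congr rfl fun j _ => ?_
  simp only [Function.comp_apply]
  ring

lemma exists_tendsto_empiricalMeasure_map_simpleFunc (μ : ProbabilityMeasure Ω)
    (φ : SimpleFunc Ω Ω) :
    ∃ p : ∀ m : ℕ, Fin (2 * m + 1) → Ω, Tendsto (fun m => empiricalMeasure (p m)) atTop
      (𝓝 (μ.map φ.measurable.aemeasurable)) := by
  let f : Ω → φ.range := fun ω => ⟨φ ω, φ.mem_range_self ω⟩
  have hf : Measurable f := φ.measurable.subtype_mk
  obtain ⟨p, hp⟩ := exists_tendsto_empiricalMeasure_map (μ.map hf.aemeasurable) Subtype.val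
  have hmap : (μ.map hf.aemeasurable).map (measurable_of_finite Subtype.val).aemeasurable =
      μ.map φ.measurable.aemeasurable :=
    Subtype.ext (Measure.map_map measurable_subtype_coe hf)
  exact ⟨p, hmap ▸ hp⟩

end EmpiricalMeasure

section Density

variable {Ω : Type*} [PseudoEMetricSpace Ω] [SeparableSpace Ω] [MeasurableSpace Ω]
  [OpensMeasurableSpace Ω]

lemma exists_simpleFunc_tendsto_map [Nonempty Ω] : ∃ φ : ℕ → SimpleFunc Ω Ω,
    ∀ μ : ProbabilityMeasure Ω,
      Tendsto (fun r => μ.map (φ r).measurable.aemeasurable) atTop (𝓝 μ) := by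
  obtain ⟨y₀⟩ := ‹Nonempty Ω›
  let φ := SimpleFunc.approxOn id measurable_id Set.univ y₀ (Set.mem_univ y₀)
  refine ⟨φ, fun μ => ?_⟩
  have h := (tendstoInDistribution_of_ae_tendsto (μ' := (μ : Measure Ω)) (Z := id)
    (fun r => (φ r).measurable.aemeasurable) measurable_id.aemeasurable
    (Eventually.of_forall fun ω => SimpleFunc.tendsto_approxOn measurable_id _ (by simp))).tendsto
  rwa [show (⟨(μ : Measure Ω).map id, _⟩ : ProbabilityMeasure Ω) = μ from
    Subtype.ext Measure.map_id] at h

lemma mem_closure_empiricalMeasure_tuples [MeasurableSingletonClass Ω] [Nonempty Ω] {κ : Type*}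
    (μ : κ → ProbabilityMeasure Ω) :
    μ ∈ closure {ν | ∃ m, ∃ p : κ → Fin (2 * m + 1) → Ω, ν = fun i => empiricalMeasure (p i)} := by
  obtain ⟨φ, hφ⟩ := exists_simpleFunc_tendsto_map (Ω := Ω)
  rw [← closure_closure]
  refine mem_closure_of_tendsto (tendsto_pi_nhds.2 fun i => hφ (μ i))
    (Eventually.of_forall fun r => ?_)
  choose p hp using fun i => exists_tendsto_empiricalMeasure_map_simpleFunc (μ i) (φ r)
  exact mem_closure_of_tendsto (tendsto_pi_nhds.2 hp)
    (Eventually.of_forall fun m => ⟨m, fun i => p i m, rfl⟩)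

end Density

section GeneralPosition

variable {ι E : Type*} [NormedAddCommGroup E] [NormedSpace ℝ E]

-- Stronger than `InGeneralPosition`, but it survives adding a point off the spans of the others.
def AffineGeneralPositionOn (p : ι → E) (t : Set ι) : Prop :=
  ∀ s : Finset ι, ↑s ⊆ t → s.card ≤ finrank ℝ E + 1 → AffineIndependent ℝ (fun i : s => p i)

lemma affineSpan_image_finset_ne_top (p : ι → E) {s : Finset ι} (hs : s.card ≤ finrank ℝ E) :
    affineSpan ℝ (p '' s) ≠ ⊤ := by
  classical
  intro htop
  obtain rfl | ⟨m, hm⟩ :=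
    s.eq_empty_or_nonempty.imp id fun h => Nat.exists_eq_add_one.2 h.card_pos
  · simp at htop
  have hle := finrank_vectorSpan_image_finset_le ℝ p s hm
  rw [Finset.coe_image, ← direction_affineSpan, htop, AffineSubspace.direction_top,
    finrank_top] at hle
  omega

lemma dense_iInter_compl_affineSpan [FiniteDimensional ℝ E] [Countable ι] (p : ι → E) :
    Dense (⋂ s ∈ {s : Finset ι | s.card ≤ finrank ℝ E}, (affineSpan ℝ (p '' s) : Set E)ᶜ) := by
  refine dense_biInter_of_isOpen
    (fun s _ => (AffineSubspace.closed_of_finiteDimensional _).isOpen_compl)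
    (Set.to_countable _) fun s hs => interior_eq_empty_iff_dense_compl.1 ?_
  by_contra h
  refine affineSpan_image_finset_ne_top p hs ?_
  rw [← AffineSubspace.affineSpan_coe (affineSpan ℝ _)]
  exact (AffineSubspace.convex _).interior_nonempty_iff_affineSpan_eq_top.1
    (Set.nonempty_iff_ne_empty.2 h)

lemma AffineGeneralPositionOn.update [DecidableEq ι] {a : ι → E} {t : Set ι}
    (ha : AffineGeneralPositionOn a t) (j : ι) {x : E}
    (hx : ∀ s : Finset ι, s.card ≤ finrank ℝ E → x ∉ affineSpan ℝ (a '' s)) :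
    AffineGeneralPositionOn (Function.update a j x) (insert j t) := by
  intro s hst hcard
  have hs_erase : ↑(s.erase j) ⊆ t := by
    intro i hi
    obtain ⟨hij, his⟩ := Finset.mem_erase.1 hi
    exact (hst his).resolve_left hij
  by_cases hj : j ∈ s
  · have hcard_erase : (s.erase j).card ≤ finrank ℝ E := by
      rw [Finset.card_erase_of_mem hj]; omega
    refine AffineIndependent.affineIndependent_of_notMem_span (i := ⟨j, hj⟩) ?_ ?_
    · let e : {y : s // y ≠ ⟨j, hj⟩} ↪ s.erase j :=
        ⟨fun y => ⟨y.1.1, Finset.mem_erase.2 ⟨fun h => y.2 (Subtype.ext h), y.1.2⟩⟩,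
          fun y z h => Subtype.ext (Subtype.ext (congrArg (fun w => w.1) h))⟩
      have hfun : (fun y : {y : s // y ≠ ⟨j, hj⟩} => Function.update a j x y) =
          (fun i : s.erase j => a i) ∘ e :=
        funext fun y => Function.update_of_ne (fun h => y.2 (Subtype.ext h)) _ _
      rw [hfun]
      exact (ha (s.erase j) hs_erase (by omega)).comp_embedding e
    · have himage : (fun y : s => Function.update a j x y) '' {y | y ≠ ⟨j, hj⟩} ⊆
          a '' ↑(s.erase j) := by
        rintro _ ⟨y, hy, rfl⟩
        have hyj : (y : ι) ≠ j := fun h => hy (Subtype.ext h)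
        exact ⟨y, Finset.mem_erase.2 ⟨hyj, y.2⟩, (Function.update_of_ne hyj _ _).symm⟩
      rw [Function.update_self]
      exact fun hmem => hx (s.erase j) hcard_erase (affineSpan_mono ℝ himage hmem)
  · have hs : ↑s ⊆ t := by
      rw [← Finset.erase_eq_of_notMem hj]; exact hs_erase
    have hfun : (fun y : s => Function.update a j x y) = fun y : s => a y :=
      funext fun y => Function.update_of_ne (fun h : (y : ι) = j => hj (h ▸ y.2)) _ _
    rw [hfun]
    exact ha s hs hcard

lemma dense_setOf_affineGeneralPositionOn [FiniteDimensional ℝ E] [Countable ι]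
    (t : Finset ι) : Dense {p : ι → E | AffineGeneralPositionOn p t} := by
  classical
  induction t using Finset.induction_on with
  | empty =>
    convert dense_univ
    refine Set.eq_univ_of_forall fun p s hs _ => ?_
    obtain rfl : s = ∅ := Finset.subset_empty.1 (Finset.coe_subset.1 hs)
    exact affineIndependent_of_subsingleton ℝ _
  | insert j t _ ih =>
    refine dense_iff_inter_open.2 fun U hU ⟨q, hq⟩ => ?_
    obtain ⟨a, haU, ha⟩ := dense_iff_inter_open.1 ih U hU ⟨q, hq⟩
    have hV : IsOpen {x : E | Function.update a j x ∈ U} :=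
      hU.preimage (continuous_const.update j continuous_id)
    obtain ⟨x, hxV, hx⟩ := dense_iff_inter_open.1 (dense_iInter_compl_affineSpan a) _ hV
      ⟨a j, by simpa using haU⟩
    refine ⟨_, hxV, ?_⟩
    rw [Finset.coe_insert]
    exact ha.update j fun s hs => Set.mem_iInter₂.1 hx s hs

end GeneralPosition

lemma AffineGeneralPositionOn.inGeneralPosition {ι : Type*} {n : ℕ} {p : ι → (Fin n → ℝ)}
    (hp : AffineGeneralPositionOn p Set.univ) : InGeneralPosition p := by
  intro A hA
  by_contra! hlt
  obtain ⟨t, htZ, htcard⟩ := Set.exists_subset_encard_eq (Order.add_one_le_of_lt hlt)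
  have htfin : t.Finite := Set.finite_of_encard_eq_coe htcard
  set s := htfin.toFinset
  have hs : s.card = n + 1 := by
    rw [← Nat.cast_inj (R := ℕ∞), ← Set.encard_coe_eq_coe_finsetCard, htfin.coe_toFinset, htcard]
    rfl
  have hAI := hp s (Set.subset_univ _) (by rw [Module.finrank_fin_fun, hs])
  have hspan : vectorSpan ℝ (Set.range fun i : s => p i) ≤ LinearMap.ker A.linear := by
    rw [vectorSpan_def, Submodule.span_le]
    rintro _ ⟨_, ⟨i, rfl⟩, _, ⟨i', rfl⟩, rfl⟩
    have hi : A (p i) = 0 := htZ (htfin.mem_toFinset.1 i.2)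
    have hi' : A (p i') = 0 := htZ (htfin.mem_toFinset.1 i'.2)
    rw [SetLike.mem_coe, LinearMap.mem_ker, A.linearMap_vsub, hi, hi', vsub_eq_sub, sub_zero]
  have hker : finrank ℝ (LinearMap.ker A.linear) < n := by
    simpa using Submodule.finrank_lt fun h => hA (LinearMap.ker_eq_top.1 h)
  have hcard := hAI.card_le_finrank_succ
  rw [Fintype.card_coe, hs] at hcard
  have := Submodule.finrank_mono hspan
  omega

theorem dense_tuples_oddlySupported_general (n k : ℕ) :
    Dense {μ : Fin k → ProbabilityMeasure (Fin n → ℝ) |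
      ∃ N : ℕ, Odd N ∧ ∃ p : Fin k → Fin N → (Fin n → ℝ),
        InGeneralPosition (fun q : Fin k × Fin N => p q.1 q.2) ∧
        ∀ i, (μ i : Measure (Fin n → ℝ)) =
          (N : ENNReal)⁻¹ • ∑ j, Measure.dirac (p i j)} := by
  intro μ
  refine closure_minimal ?_ isClosed_closure (mem_closure_empiricalMeasure_tuples μ)
  rintro _ ⟨m, p, rfl⟩
  let Φ : (Fin k × Fin (2 * m + 1) → (Fin n → ℝ)) → Fin k → ProbabilityMeasure (Fin n → ℝ) :=
    fun q i => empiricalMeasure fun l => q (i, l)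
  have hΦ : Continuous Φ := continuous_pi fun i =>
    continuous_empiricalMeasure.comp (continuous_pi fun l => continuous_apply (i, l))
  refine closure_mono ?_ (hΦ.range_subset_closure_image_dense
    (dense_setOf_affineGeneralPositionOn Finset.univ) ⟨Function.uncurry p, rfl⟩)
  rintro _ ⟨q, hq, rfl⟩
  rw [Set.mem_ofPred_eq, Finset.coe_univ] at hq
  exact ⟨2 * m + 1, odd_two_mul_add_one m, fun i l => q (i, l), hq.inGeneralPosition,
    fun i => rfl⟩

theorem dense_tuples_oddlySupported (n k : ℕ) (hk : 0 < k) :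
    Dense {μ : Fin k → ProbabilityMeasure (Fin n → ℝ) |
      ∃ N : ℕ, Odd N ∧ ∃ p : Fin k → Fin N → (Fin n → ℝ),
        InGeneralPosition (fun q : Fin k × Fin N => p q.1 q.2) ∧
        ∀ i, (μ i : Measure (Fin n → ℝ)) =
          (N : ENNReal)⁻¹ • ∑ j, Measure.dirac (p i j)} :=
  dense_tuples_oddlySupported_general n k
end
end

section
/- Let n and D be positive integers with n a power of two. Then the number N(n, D) = (nD)! / (D! · (n!)^D) of unordered partitions of a set of nD elements into D blocks of n elements each is odd. -/
/-!
Fixing a point `x`, a partition into blocks of size `n` is the choice of the block through `x`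
(`(|s| - 1).choose (n - 1)` ways) together with a partition of the rest; this is the recursion
of `Nat.uniformBell D n = (nD)! / (D! (n!)^D)`. For `n = p ^ m`, Legendre's formula gives
`v_p((p^m D)!) = v_p(D!) + (1 + p + ⋯ + p^(m-1)) D` and `v_p((p^m)!) = 1 + p + ⋯ + p^(m-1)`,
so the `p`-adic valuations of `(nD)!` and `D! (n!)^D` agree and the quotient is prime to `p`.
-/

open Finset Finpartition

namespace Finpartition

variable {α : Type*} [DecidableEq α] {s t : Finset α}

lemma avoid_parts_of_mem (P : Finpartition s) (ht : t ∈ P.parts) :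
    (P.avoid t).parts = P.parts.erase t := by
  ext c
  simp only [mem_avoid, mem_erase]
  constructor
  · rintro ⟨d, hd, hdt, rfl⟩
    have hne : d ≠ t := by rintro rfl; exact hdt le_rfl
    have hdisj : Disjoint d t := P.disjoint hd ht hne
    rw [hdisj.sdiff_eq_left]
    exact ⟨hne, hd⟩
  · rintro ⟨hct, hc⟩
    have hdisj : Disjoint c t := P.disjoint hc ht hct
    refine ⟨c, hc, fun hle => P.ne_bot hc ?_, hdisj.sdiff_eq_left⟩
    exact hdisj.eq_bot_of_le hle

end Finpartition

section UniformPartitions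

variable {α : Type*} [DecidableEq α]

def uniformPartitions (s : Finset α) (n : ℕ) : Finset (Finpartition s) :=
  univ.filter fun P => ∀ b ∈ P.parts, #b = n

variable {s t : Finset α} {n : ℕ}

lemma card_uniformPartitions_filter_part_eq {x : α} (hxt : x ∈ t) (hts : t ⊆ s) (ht : #t = n) :
    #((uniformPartitions s n).filter (·.part x = t)) = #(uniformPartitions (s \ t) n) := by
  have htne : t ≠ ⊥ := ne_empty_of_mem hxt
  refine card_nbij' (·.avoid t)
    (·.extend htne disjoint_sdiff_self_left (sdiff_sup_cancel hts)) ?_ ?_ ?_ ?_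
  · intro P hP
    simp only [uniformPartitions, mem_coe, mem_filter, mem_univ, true_and] at hP ⊢
    obtain ⟨hPn, rfl⟩ := hP
    intro b hb
    rw [P.avoid_parts_of_mem (P.part_mem.2 (hts hxt))] at hb
    exact hPn b (mem_of_mem_erase hb)
  · intro P hP
    simp only [uniformPartitions, mem_coe, mem_filter, mem_univ, true_and] at hP ⊢
    refine ⟨?_, part_eq_of_mem _ (by simp) hxt⟩
    simp only [extend_parts, mem_insert, forall_eq_or_imp]
    exact ⟨ht, hP⟩
  · intro P hP
    simp only [uniformPartitions, mem_coe, mem_filter, mem_univ, true_and] at hP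
    obtain ⟨-, rfl⟩ := hP
    ext1
    have htP : P.part x ∈ P.parts := P.part_mem.2 (hts hxt)
    rw [extend_parts, P.avoid_parts_of_mem htP, insert_erase htP]
  · intro P _
    ext1
    rw [avoid_parts_of_mem _ (by simp), extend_parts, erase_insert]
    exact fun htP => (mem_sdiff.1 (P.le htP hxt)).2 hxt

theorem card_uniformPartitions (hn : 0 < n) {D : ℕ} (hs : #s = n * D) :
    #(uniformPartitions s n) = D.uniformBell n := by
  induction D generalizing s with
  | zero =>
    obtain rfl : s = ⊥ := by simpa using hs
    rw [Nat.uniformBell_zero_left, card_eq_one]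
    refine ⟨⊥, eq_singleton_iff_unique_mem.2 ⟨?_, fun P _ => Subsingleton.elim P ⊥⟩⟩
    simp [uniformPartitions]
  | succ D ih =>
    obtain ⟨x, hx⟩ : s.Nonempty := card_pos.1 (by rw [hs]; positivity)
    have hpart (P) (hP : P ∈ uniformPartitions s n) :
        P.part x ∈ (s.powersetCard n).filter ({x} ⊆ ·) := by
      simp only [uniformPartitions, mem_filter, mem_univ, true_and] at hP
      simp only [mem_filter, mem_powersetCard, singleton_subset_iff]
      exact ⟨⟨P.part_subset x, hP _ (P.part_mem.2 hx)⟩, P.mem_part_self.2 hx⟩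
    calc #(uniformPartitions s n)
        = ∑ t ∈ (s.powersetCard n).filter ({x} ⊆ ·),
            #((uniformPartitions s n).filter (·.part x = t)) := card_eq_sum_card_fiberwise hpart
      _ = ∑ t ∈ (s.powersetCard n).filter ({x} ⊆ ·), D.uniformBell n := by
        refine sum_congr rfl fun t ht => ?_
        simp only [mem_filter, mem_powersetCard, singleton_subset_iff] at ht
        obtain ⟨⟨hts, htn⟩, hxt⟩ := ht
        rw [card_uniformPartitions_filter_part_eq hxt hts htn]
        exact ih (by rw [card_sdiff_of_subset hts, hs, htn, mul_add_one, Nat.add_sub_cancel])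
      _ = (D + 1).uniformBell n := by
        rw [sum_const, card_filter_powersetCard_subset _ _ _ (singleton_subset_iff.2 hx)
          (by rwa [card_singleton]), smul_eq_mul, Nat.uniformBell_succ_left, hs, card_singleton,
          mul_add_one, mul_comm n D]

theorem natCard_uniformPartitions (hn : 0 < n) {D : ℕ} (hs : #s = n * D) :
    Nat.card {P : Finpartition s // ∀ b ∈ P.parts, #b = n} = D.uniformBell n := by
  rw [Nat.card_eq_fintype_card, Fintype.card_subtype]
  exact card_uniformPartitions hn hs

end UniformPartitions

theorem padicValNat_factorial_pow_mul (p : ℕ) [Fact p.Prime] (m D : ℕ) :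
    padicValNat p (p ^ m * D).factorial =
      padicValNat p D.factorial + (∑ i ∈ range m, p ^ i) * D := by
  induction m with
  | zero => simp
  | succ m ih =>
    rw [pow_succ', mul_assoc, padicValNat_factorial_mul, ih, sum_range_succ]
    ring

theorem not_dvd_uniformBell_prime_pow (p : ℕ) [hp : Fact p.Prime] (D m : ℕ) :
    ¬p ∣ D.uniformBell (p ^ m) := by
  have hB := Nat.uniformBell_mul_eq D (pow_ne_zero m hp.out.ne_zero)
  have hB0 : D.uniformBell (p ^ m) ≠ 0 :=
    left_ne_zero_of_mul (left_ne_zero_of_mul (hB ▸ Nat.factorial_ne_zero _))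
  have hblock : padicValNat p (p ^ m).factorial = ∑ i ∈ range m, p ^ i := by
    simpa using padicValNat_factorial_pow_mul p m 1
  have hval := congrArg (padicValNat p) hB
  rw [padicValNat.mul (by positivity) (Nat.factorial_ne_zero _),
    padicValNat.mul hB0 (pow_ne_zero _ (Nat.factorial_ne_zero _)), padicValNat.pow, hblock,
    mul_comm D (p ^ m), padicValNat_factorial_pow_mul] at hval
  rw [dvd_iff_padicValNat_ne_zero hB0, not_not]
  linarith

theorem odd_number_of_partitions_general (n D : ℕ)
    (hpow : ∃ m : ℕ, n = 2 ^ m) :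
    Nat.card {P : Finpartition (Finset.univ : Finset (Fin (n * D))) //
        ∀ b ∈ P.parts, b.card = n} =
      (n * D).factorial / (D.factorial * n.factorial ^ D) ∧
    Odd ((n * D).factorial / (D.factorial * n.factorial ^ D)) := by
  obtain ⟨m, rfl⟩ := hpow
  have hn : 0 < 2 ^ m := Nat.two_pow_pos m
  have hformula : (2 ^ m * D).factorial / (D.factorial * (2 ^ m).factorial ^ D) =
      D.uniformBell (2 ^ m) := by
    rw [Nat.uniformBell_eq_div D hn.ne', mul_comm D, mul_comm D.factorial]
  rw [natCard_uniformPartitions hn (card_fin _), hformula, ← Nat.not_even_iff_odd,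
    even_iff_two_dvd]
  exact ⟨rfl, not_dvd_uniformBell_prime_pow 2 D m⟩

theorem odd_number_of_partitions (n D : ℕ) (hn : 0 < n) (hD : 0 < D)
    (hpow : ∃ m : ℕ, n = 2 ^ m) :
    Nat.card {P : Finpartition (Finset.univ : Finset (Fin (n * D))) //
        ∀ b ∈ P.parts, b.card = n} =
      (n * D).factorial / (D.factorial * n.factorial ^ D) ∧
    Odd ((n * D).factorial / (D.factorial * n.factorial ^ D)) :=
  odd_number_of_partitions_general n D hpow
end

section
/- Let n, D be positive integers and let v_1, …, v_{nD+1} be points in ℝ^n such that no n+1 of them lie on a common affine hyperplane. Then no arrangement of D hyperplanes in ℝ^n bisects all of the Dirac point masses δ_{v_1}, …, δ_{v_{nD+1}} simultaneously; that is, at least D+1 hyperplanes are needed to bisect this family of measures. -/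
open MeasureTheory

noncomputable section

/-- An arrangement of `D` hyperplanes in `ℝ^n`: a `D`-tuple of affine functions,
each with nonzero linear part. -/
def IsArrangement {n D : ℕ} (A : Fin D → ((Fin n → ℝ) →ᵃ[ℝ] ℝ)) : Prop :=
  ∀ i, (A i).linear ≠ 0

/-- The arrangement given by the affine functions `A i` bisects a measure `μ` if both
the set where the product polynomial is positive and the set where it is negative
have measure at most half of the total measure. -/
def Bisects {n D : ℕ} (A : Fin D → ((Fin n → ℝ) →ᵃ[ℝ] ℝ))
    (μ : Measure (Fin n → ℝ)) : Prop :=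
  μ {x | 0 < ∏ i, A i x} ≤ μ Set.univ / 2 ∧
    μ {x | ∏ i, A i x < 0} ≤ μ Set.univ / 2

/-! A point mass carries its whole (unit) mass on one side of the arrangement unless
the point lies on one of its hyperplanes, so an arrangement bisecting `δ_v` passes through `v`.
In general position each of the `D` hyperplanes contains at most `n` of the points, so `D`
hyperplanes cover at most `n * D < n * D + 1` of them. -/

theorem ENNReal.not_one_le_half : ¬ (1 : ENNReal) ≤ 1 / 2 := by
  rw [not_le]
  exact ENNReal.half_lt_self one_ne_zero ENNReal.one_ne_top

theorem exists_eq_zero_of_bisects_dirac {n D : ℕ} {A : Fin D → ((Fin n → ℝ) →ᵃ[ℝ] ℝ)}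
    {x : Fin n → ℝ} (h : Bisects A (Measure.dirac x)) : ∃ i, A i x = 0 := by
  suffices ∏ i, A i x = 0 by simpa [Finset.prod_eq_zero_iff] using this
  by_contra hne
  obtain ⟨hpos, hneg⟩ := h
  rw [Measure.dirac_apply_of_mem (Set.mem_univ x)] at hpos hneg
  rcases lt_or_gt_of_ne hne with hlt | hgt
  · exact ENNReal.not_one_le_half (by rwa [Measure.dirac_apply_of_mem (by exact hlt)] at hneg)
  · exact ENNReal.not_one_le_half (by rwa [Measure.dirac_apply_of_mem (by exact hgt)] at hpos)

open Finset in
theorem InGeneralPosition.card_le_of_forall_exists_eq_zero {n : ℕ} {ι κ : Type*}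
    [Fintype ι] [Fintype κ] {p : ι → (Fin n → ℝ)} (hp : InGeneralPosition p)
    {A : κ → ((Fin n → ℝ) →ᵃ[ℝ] ℝ)} (hA : ∀ i, (A i).linear ≠ 0)
    (hcover : ∀ k, ∃ i, A i (p k) = 0) : Fintype.card ι ≤ Fintype.card κ * n := by
  classical
  have hfiber : ∀ i, #{k | A i (p k) = 0} ≤ n := fun i => by
    have := hp (A i) (hA i)
    rwa [← coe_filter_univ, Set.encard_coe_eq_coe_finsetCard, Nat.cast_le] at this
  calc Fintype.card ι = #(univ : Finset ι) := card_univ.symm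
    _ ≤ #(univ.biUnion fun i => {k | A i (p k) = 0}) :=
        card_le_card fun k _ => by simpa using hcover k
    _ ≤ ∑ i, #{k | A i (p k) = 0} := card_biUnion_le
    _ ≤ ∑ _i : κ, n := sum_le_sum fun i _ => hfiber i
    _ = Fintype.card κ * n := by simp

theorem no_bisection_of_deltas_in_general_position_general (n D : ℕ)
    (v : Fin (n * D + 1) → (Fin n → ℝ)) (hgp : InGeneralPosition v) :
    ¬ ∃ A : Fin D → ((Fin n → ℝ) →ᵃ[ℝ] ℝ),
        IsArrangement A ∧ ∀ k, Bisects A (Measure.dirac (v k)) := by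
  rintro ⟨A, hA, hbis⟩
  have hcard := hgp.card_le_of_forall_exists_eq_zero hA
    fun k => exists_eq_zero_of_bisects_dirac (hbis k)
  simp only [Fintype.card_fin] at hcard
  lia

theorem no_bisection_of_deltas_in_general_position (n D : ℕ) (hn : 0 < n) (hD : 0 < D)
    (v : Fin (n * D + 1) → (Fin n → ℝ)) (hgp : InGeneralPosition v) :
    ¬ ∃ A : Fin D → ((Fin n → ℝ) →ᵃ[ℝ] ℝ),
        IsArrangement A ∧ ∀ k, Bisects A (Measure.dirac (v k)) :=
  no_bisection_of_deltas_in_general_position_general n D v hgp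
end
end

section
/- Let m ≥ 0 and n ≥ 1 be integers with 2^m ≤ n, and let D ≥ 2 be an integer. Then there exist nonnegative integers k_1, …, k_D with k_i ≤ n for every i, k_1 + ⋯ + k_D = 2^{m+1} − 1, and such that the multinomial coefficient (2^{m+1} − 1)! / (k_1! · k_2! ⋯ k_D!) is odd. -/
/-!
Take `k = (2 ^ m, 2 ^ m - 1, 0, …, 0)`. Its multinomial coefficient is the binomial coefficient
`choose (2 ^ (m + 1) - 1) (2 ^ m)`, which is odd by Lucas's theorem because all binary digits of
`2 ^ (m + 1) - 1` are `1`.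
-/

open Finset

theorem Nat.two_pow_sub_one_div_two_pow_mod_two {s i : ℕ} (hi : i < s) :
    (2 ^ s - 1) / 2 ^ i % 2 = 1 := by
  simpa [hi, Nat.testBit_eq_decide_div_mod_eq] using Nat.testBit_two_pow_sub_one s i

theorem Nat.choose_two_pow_sub_one_modEq_one {s k : ℕ} (hk : k < 2 ^ s) :
    (2 ^ s - 1).choose k ≡ 1 [MOD 2] := by
  have : Fact (Nat.Prime 2) := ⟨Nat.prime_two⟩
  refine (Choose.choose_modEq_prod_range_choose_nat (by omega) hk).trans ?_
  rw [prod_eq_one fun i hi => ?_]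
  rw [two_pow_sub_one_div_two_pow_mod_two (mem_range.mp hi)]
  have : k / 2 ^ i % 2 < 2 := mod_lt _ two_pos
  interval_cases k / 2 ^ i % 2 <;> rfl

theorem Nat.odd_choose_two_pow_sub_one {s k : ℕ} (hk : k < 2 ^ s) :
    Odd ((2 ^ s - 1).choose k) :=
  odd_iff.mpr (choose_two_pow_sub_one_modEq_one hk)

theorem Nat.multinomial_univ_pi_single_add_pi_single {α : Type*} [Fintype α] [DecidableEq α]
    {a b : α} (hab : a ≠ b) (x y : ℕ) :
    multinomial univ (Pi.single a x + Pi.single b y) = (x + y).choose x := by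
  rw [← multinomial_congr_of_sdiff (subset_univ {a, b}) (by simp_all) (fun _ _ => rfl),
    binomial_eq_choose hab]
  simp [hab, hab.symm]

theorem exists_odd_multinomial_general (m n D : ℕ)
    (hmn : 2 ^ m ≤ n) (hD : 2 ≤ D) :
    ∃ k : Fin D → ℕ, (∀ i, k i ≤ n) ∧ (∑ i, k i) = 2 ^ (m + 1) - 1 ∧
      Odd (Nat.multinomial Finset.univ k) := by
  have hpos : 0 < 2 ^ m := Nat.two_pow_pos m
  have hsum : 2 ^ m + (2 ^ m - 1) = 2 ^ (m + 1) - 1 := by rw [pow_succ]; omega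
  let a : Fin D := ⟨0, by omega⟩
  let b : Fin D := ⟨1, by omega⟩
  have hab : a ≠ b := by simp [a, b, Fin.ext_iff]
  refine ⟨Pi.single a (2 ^ m) + Pi.single b (2 ^ m - 1), fun i => ?_, ?_, ?_⟩
  · simp only [Pi.add_apply, Pi.single_apply]
    split_ifs <;> omega
  · simp [sum_add_distrib, hsum]
  · rw [Nat.multinomial_univ_pi_single_add_pi_single hab, hsum]
    exact Nat.odd_choose_two_pow_sub_one (Nat.pow_lt_pow_succ one_lt_two)

theorem exists_odd_multinomial (m n D : ℕ) (hm : 0 ≤ m) (hn : 1 ≤ n)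
    (hmn : 2 ^ m ≤ n) (hD : 2 ≤ D) :
    ∃ k : Fin D → ℕ, (∀ i, k i ≤ n) ∧ (∑ i, k i) = 2 ^ (m + 1) - 1 ∧
      Odd (Nat.multinomial Finset.univ k) :=
  exists_odd_multinomial_general m n D hmn hD
end
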